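/- Let E be a field of characteristic 0 and V a finite-dimensional E-vector space regarded with the data (V, W, N₁, ..., N_n, α) as in the definition of Deligne system (W a finite increasing filtration, N_j commuting nilpotents respecting W, α a 𝔾_m-action). Let a_{j,k} ∈ E for 1 ≤ k ≤ j ≤ n with a_{j,j} ≠ 0, and set N'_j = Σ_{k=1}^j a_{j,k} N_k. If for each 1 ≤ j ≤ n the relative monodromy filtration W^{(j)} of N_j with respect to W^{(j-1)} exists (where W^{(0)} = W), then for each j the relative monodromy filtration of N'_j with respect to the filtration W'^{(j-1)} built the same way from the N'_k exists and equals W^{(j)}, i.e., W'^{(j)} = W^{(j)} for all j, provided the Deligne-system conditions (a)–(e) hold for (V, W, N₁,...,N_n, α). -/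

import Mathlib

open Submodule

/-- `W` is a finite increasing filtration on `V`. -/
def IsFinFiltrationZ {E V : Type*} [Field E] [AddCommGroup V] [Module E V]
    (W : ℤ → Submodule E V) : Prop :=
  Monotone W ∧ (∃ a : ℤ, ∀ w ≤ a, W w = ⊥) ∧ (∃ b : ℤ, ∀ w : ℤ, b ≤ w → W w = ⊤)

/-- `W'` is the relative monodromy filtration of `N` with respect to `W`:
`W'` is a finite increasing filtration, `N (W'_w) ⊆ W'_{w-2}`, and for all `w` and `m ≥ 0`
the map induced by `N^m` from `gr^{W'}_{w+m} gr^W_w` to `gr^{W'}_{w-m} gr^W_w` is an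
isomorphism (expressed at the level of subspaces of `V`: the `k`-th piece of the filtration
induced by `W'` on `gr^W_w` is the image of `(W' k ⊓ W w) ⊔ W (w-1)`). -/
def IsRelMonodromy {E V : Type*} [Field E] [AddCommGroup V] [Module E V]
    (N : V →ₗ[E] V) (W W' : ℤ → Submodule E V) : Prop :=
  IsFinFiltrationZ W' ∧
  (∀ w : ℤ, (W' w).map N ≤ W' (w - 2)) ∧
  (∀ (w : ℤ) (m : ℕ),
    -- injectivity of the induced map `N^m : gr^{W'}_{w+m} gr^W_w → gr^{W'}_{w-m} gr^W_w`
    (∀ x ∈ W' (w + (m : ℤ)) ⊓ W w,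
        (N ^ m) x ∈ (W' (w - (m : ℤ) - 1) ⊓ W w) ⊔ W (w - 1) →
        x ∈ (W' (w + (m : ℤ) - 1) ⊓ W w) ⊔ W (w - 1)) ∧
    -- surjectivity of the induced map
    (∀ y ∈ W' (w - (m : ℤ)) ⊓ W w, ∃ x ∈ W' (w + (m : ℤ)) ⊓ W w,
        y - (N ^ m) x ∈ (W' (w - (m : ℤ) - 1) ⊓ W w) ⊔ W (w - 1)))

/-!
Modulo `W^{(j-1)}_{w-1}`, the operator `N'_j` agrees with `a_{j,j} N_j` on `W^{(j-1)}_w`: the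
other summands `a_{j,k} N_k` with `k < j` lower `W^{(j-1)}` by two. Hence the same holds for
the powers `N'_j^m` and `a_{j,j}^m N_j^m`, so both induce the same maps on `gr^{W^{(j-1)}}`, up
to the unit `a_{j,j}^m`; the isomorphism conditions for `N_j` therefore transfer to `N'_j`.
-/

section RelMonodromy

variable {E V : Type*} [Field E] [AddCommGroup V] [Module E V]

theorem Submodule.map_sum_smul_le {ι : Type*} {s : Finset ι} {f : ι → V →ₗ[E] V} (a : ι → E)
    {p q : Submodule E V} (hf : ∀ k ∈ s, p.map (f k) ≤ q) :
    p.map (∑ k ∈ s, a k • f k) ≤ q := by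
  rintro _ ⟨x, hx, rfl⟩
  rw [LinearMap.sum_apply]
  exact q.sum_mem fun k hk => q.smul_mem _ (hf k hk (mem_map_of_mem hx))

theorem Submodule.map_pow_le_of_map_le {W : ℤ → Submodule E V} {N : V →ₗ[E] V}
    (hN : ∀ w, (W w).map N ≤ W w) (m : ℕ) (w : ℤ) : (W w).map (N ^ m) ≤ W w := by
  induction m with
  | zero => rw [pow_zero, Module.End.one_eq_id, map_id]
  | succ m ih =>
    rw [pow_succ, Module.End.mul_eq_comp, map_comp]
    exact (map_mono (hN w)).trans ih

theorem Submodule.map_pow_sub_smul_pow_le {W : ℤ → Submodule E V} (hW : Monotone W)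
    {N N' : V →ₗ[E] V} {c : E} (hN : ∀ w, (W w).map N ≤ W w)
    (hN' : ∀ w, (W w).map (N' - c • N) ≤ W (w - 1)) (m : ℕ) (w : ℤ) :
    (W w).map (N' ^ m - c ^ m • N ^ m) ≤ W (w - 1) := by
  have hN'pres : (W w).map N' ≤ W w := by
    rintro _ ⟨x, hx, rfl⟩
    have hsplit : N' x = (N' - c • N) x + c • N x := by simp
    rw [hsplit]
    exact add_mem (hW (by omega) (hN' w (mem_map_of_mem hx)))
      (smul_mem _ _ (hN w (mem_map_of_mem hx)))
  induction m with
  | zero => simp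
  | succ m ih =>
    have hstep : N' ^ (m + 1) - c ^ (m + 1) • N ^ (m + 1) =
        (N' ^ m - c ^ m • N ^ m) * N' + c ^ m • (N ^ m * (N' - c • N)) := by
      simp only [pow_succ, mul_sub, sub_mul, mul_smul_comm, smul_mul_assoc, smul_sub, smul_smul]
      abel
    rintro _ ⟨x, hx, rfl⟩
    rw [hstep, LinearMap.add_apply, LinearMap.smul_apply, Module.End.mul_apply,
      Module.End.mul_apply]
    exact add_mem (ih (mem_map_of_mem (hN'pres (mem_map_of_mem hx))))
      (smul_mem _ _ (map_pow_le_of_map_le hN m (w - 1)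
        (mem_map_of_mem (hN' w (mem_map_of_mem hx)))))

theorem IsRelMonodromy.of_map_pow_sub_smul_pow_le {N N' : V →ₗ[E] V}
    {W W' : ℤ → Submodule E V} {c : E} (h : IsRelMonodromy N W W') (hc : c ≠ 0)
    (hN' : ∀ w, (W' w).map N' ≤ W' (w - 2))
    (hpow : ∀ (m : ℕ) w, (W w).map (N' ^ m - c ^ m • N ^ m) ≤ W (w - 1)) :
    IsRelMonodromy N' W W' := by
  obtain ⟨hW', -, hiso⟩ := h
  refine ⟨hW', hN', fun w m => ⟨fun x hx hN'x => ?_, fun y hy => ?_⟩⟩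
  · have hdiff := hpow m w (mem_map_of_mem hx.2)
    refine (hiso w m).1 x hx ?_
    have hNx : c ^ m • (N ^ m) x = (N' ^ m) x - (N' ^ m - c ^ m • N ^ m) x := by simp
    have := smul_mem _ (c ^ m)⁻¹ (hNx ▸ sub_mem hN'x (mem_sup_right hdiff))
    rwa [inv_smul_smul₀ (pow_ne_zero m hc)] at this
  · obtain ⟨x, hx, hyx⟩ := (hiso w m).2 y hy
    refine ⟨(c ^ m)⁻¹ • x, smul_mem _ _ hx, ?_⟩
    have hdiff := hpow m w (mem_map_of_mem hx.2)
    have hy' : y - (N' ^ m) ((c ^ m)⁻¹ • x) =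
        (y - (N ^ m) x) - (c ^ m)⁻¹ • (N' ^ m - c ^ m • N ^ m) x := by
      simp [smul_sub, smul_smul, inv_mul_cancel₀ (pow_ne_zero m hc)]
    rw [hy']
    exact sub_mem hyx (mem_sup_right (smul_mem _ _ hdiff))

end RelMonodromy

theorem deligne_system_triangular_change_general
    {E V : Type*} [Field E] [AddCommGroup V] [Module E V] (n : ℕ)
    (N : ℕ → (V →ₗ[E] V)) (Wf : ℕ → (ℤ → Submodule E V))
    (hW : IsFinFiltrationZ (Wf 0))
    -- (b) the iterated relative monodromy filtrations exist
    (hb : ∀ j, 1 ≤ j → j ≤ n → IsRelMonodromy (N j) (Wf (j - 1)) (Wf j))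
    -- (d) `N_j (W^{(k)}_w) ⊆ W^{(k)}_w`, and `N_j (W^{(k)}_w) ⊆ W^{(k)}_{w-2}` if `k ≥ j`
    (hd : ∀ j k, 1 ≤ j → j ≤ n → k ≤ n → ∀ w : ℤ,
      ((Wf k) w).map (N j) ≤ (Wf k) w ∧ (j ≤ k → ((Wf k) w).map (N j) ≤ (Wf k) (w - 2)))
    -- the triangular change of operators
    (a : ℕ → ℕ → E) (ha : ∀ j, 1 ≤ j → j ≤ n → a j j ≠ 0) :
    ∀ j, 1 ≤ j → j ≤ n →
      IsRelMonodromy (∑ k ∈ Finset.Icc 1 j, a j k • N k) (Wf (j - 1)) (Wf j) := by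
  intro j hj1 hjn
  obtain ⟨i, rfl⟩ := Nat.exists_eq_add_of_le' hj1
  have hbj := hb (i + 1) hj1 hjn
  simp only [Nat.add_sub_cancel] at hbj ⊢
  have hWi : Monotone (Wf i) := by
    rcases i with _ | i
    · exact hW.1
    · exact (hb (i + 1) (by omega) (by omega)).1.1
  have hlower : ∀ w, (Wf i w).map (∑ k ∈ Finset.Icc 1 i, a (i + 1) k • N k) ≤ Wf i (w - 1) :=
    fun w => map_sum_smul_le _ fun k hk => by
      rw [Finset.mem_Icc] at hk
      exact ((hd k i hk.1 (by omega) (by omega) w).2 hk.2).trans (hWi (by omega))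
  refine hbj.of_map_pow_sub_smul_pow_le (ha _ hj1 hjn) ?_ ?_
  · refine fun w => map_sum_smul_le _ fun k hk => ?_
    rw [Finset.mem_Icc] at hk
    exact (hd k (i + 1) hk.1 (by omega) hjn w).2 hk.2
  · refine map_pow_sub_smul_pow_le hWi (fun w => (hd (i + 1) i hj1 hjn (by omega) w).1) ?_
    rw [Finset.sum_Icc_succ_top (by omega), add_sub_cancel_right]
    exact hlower

/-- Triangular change of monodromy operators in a Deligne system (Lemma 2.1.8 of the
paper).  Let `(V, W, N₁, …, N_n, α)` satisfy the conditions (a)–(e) of the definition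
of a Deligne system of `n` variables, with the iterated relative monodromy filtrations
`W^{(0)} = W, W^{(1)}, …, W^{(n)}` (here `Wf j` is `W^{(j)}` and `J` is the grading
given by the `𝔾_m`-action `α`).  Let `a_{j,k} ∈ E` for `1 ≤ k ≤ j ≤ n` with
`a_{j,j} ≠ 0` and `N'_j = Σ_{k=1}^{j} a_{j,k} N_k`.  Then for each `j` the relative
monodromy filtration of `N'_j` with respect to `W'^{(j-1)} = W^{(j-1)}` exists and
equals `W^{(j)}` (by uniqueness of relative monodromy filtrations and induction on
`j`, this is exactly the assertion that `W^{(j)}` is the relative monodromy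
filtration of `N'_j` with respect to `W^{(j-1)}`). -/
theorem deligne_system_triangular_change
    {E V : Type*} [Field E] [CharZero E] [AddCommGroup V] [Module E V]
    [FiniteDimensional E V] (n : ℕ)
    (N : ℕ → (V →ₗ[E] V)) (Wf : ℕ → (ℤ → Submodule E V)) (J : ℤ → Submodule E V)
    (hW : IsFinFiltrationZ (Wf 0))
    -- (a) the `N_j` are nilpotent, mutually commuting, and respect `W`
    (hnil : ∀ j, 1 ≤ j → j ≤ n → IsNilpotent (N j))
    (hcomm : ∀ j k, 1 ≤ j → j ≤ n → 1 ≤ k → k ≤ n → N j ∘ₗ N k = N k ∘ₗ N j)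
    (hresp : ∀ j, 1 ≤ j → j ≤ n → ∀ w : ℤ, ((Wf 0) w).map (N j) ≤ (Wf 0) w)
    -- (b) the iterated relative monodromy filtrations exist
    (hb : ∀ j, 1 ≤ j → j ≤ n → IsRelMonodromy (N j) (Wf (j - 1)) (Wf j))
    -- (c) compatibility with restriction to `U = W^{(k)}_w` for `k < j - 1`
    (hc : ∀ j k, 1 ≤ j → j ≤ n → k + 1 < j → ∀ w : ℤ,
      ∀ hU : ∀ x ∈ Wf k w, N j x ∈ Wf k w,
        IsRelMonodromy ((N j).restrict hU)
          (fun v : ℤ => ((Wf (j - 1)) v).comap ((Wf k) w).subtype)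
          (fun v : ℤ => ((Wf j) v).comap ((Wf k) w).subtype))
    -- (d) `N_j (W^{(k)}_w) ⊆ W^{(k)}_w`, and `N_j (W^{(k)}_w) ⊆ W^{(k)}_{w-2}` if `k ≥ j`
    (hd : ∀ j k, 1 ≤ j → j ≤ n → k ≤ n → ∀ w : ℤ,
      ((Wf k) w).map (N j) ≤ (Wf k) w ∧ (j ≤ k → ((Wf k) w).map (N j) ≤ (Wf k) (w - 2)))
    -- (e) the `𝔾_m`-action `α`: a grading `J` splitting `W^{(n)}`, stabilizing each
    -- `W^{(j)}_w` for `j < n`, with each `N_j` of weight `-2`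
    (hJ : DirectSum.IsInternal J)
    (hJsplit : ∀ w : ℤ, (Wf n) w = ⨆ k : ℤ, ⨆ _ : k ≤ w, J k)
    (hJstab : ∀ j, j < n → ∀ w : ℤ, (Wf j) w = ⨆ k : ℤ, ((Wf j) w ⊓ J k))
    (hJN : ∀ j, 1 ≤ j → j ≤ n → ∀ k : ℤ, (J k).map (N j) ≤ J (k - 2))
    -- the triangular change of operators
    (a : ℕ → ℕ → E) (ha : ∀ j, 1 ≤ j → j ≤ n → a j j ≠ 0) :
    ∀ j, 1 ≤ j → j ≤ n →
      IsRelMonodromy (∑ k ∈ Finset.Icc 1 j, a j k • N k) (Wf (j - 1)) (Wf j) :=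
  deligne_system_triangular_change_general n N Wf hW hb hd a ha
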